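/- Under the two-solution setup, the real number (2·L_{m₁})^{k₂}·(2·L_{m₂})^{−k₁}·α^{−(k₂·n₁ − k₁·n₂)} is different from 1; equivalently, (2·L_{m₁})^{k₂} ≠ (2·L_{m₂})^{k₁}·α^{k₂·n₁ − k₁·n₂}, where the exponent k₂·n₁ − k₁·n₂ is an integer. -/

import Mathlib

/-- The Lucas numbers: L₀ = 2, L₁ = 1, L_{n+2} = L_{n+1} + L_n. -/
def lucas : ℕ → ℕ
  | 0 => 2
  | 1 => 1
  | n + 2 => lucas (n + 1) + lucas n

/-- The golden ratio α = (1 + √5)/2. -/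
noncomputable def alpha : ℝ := (1 + Real.sqrt 5) / 2

/-!
If the two sides were equal, the irrationality of every nonzero power of `φ` would force
`k₂ n₁ = k₁ n₂` and `(2 L_{m₁})^{k₂} = (2 L_{m₂})^{k₁}`. Writing `k₁ = g u`, `k₂ = g v` with
`u, v` coprime gives a common base `c` with `2 L_{m₁} = c^u`, `2 L_{m₂} = c^v`, and `n₁ = u w`,
`n₂ = v w`. Since `8 ∤ L_m`, the exponent of `2` in `c^v` is at most `3`, so `0 < u < v ≤ 3`.
By Binet's formula the pairs `(δ^g, η^g)` and `(c φ^w, c ψ^w)` then have equal `u`-th and `v`-th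
power sums, while their products are `±1` and `±c²` with `c ≥ 2`. For `(u, v) = (1, 2), (1, 3)`
equal power sums force equal products; for `(2, 3)` they leave an integer relation that fails
modulo `c²`.
-/

open Real
open scoped goldenRatio

theorem lucas_pos : ∀ n, 0 < lucas n
  | 0 => by decide
  | 1 => by decide
  | n + 2 => Nat.add_pos_left (lucas_pos (n + 1)) _

theorem lucas_add_six (n : ℕ) : lucas (n + 6) = 5 * lucas n + 8 * lucas (n + 1) := by
  simp only [lucas]
  ring

theorem not_eight_dvd_lucas (n : ℕ) : ¬ 8 ∣ lucas n := by
  induction n using Nat.strong_induction_on with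
  | _ n ih =>
    rcases lt_or_ge n 6 with hn | hn
    · interval_cases n <;> decide
    · obtain ⟨m, rfl⟩ := Nat.exists_eq_add_of_le' hn
      have := ih m (by omega)
      rw [lucas_add_six]
      omega

theorem lucas_eq_goldenRatio_pow_add_goldenConj_pow : ∀ n, (lucas n : ℝ) = φ ^ n + ψ ^ n
  | 0 => by norm_num [lucas]
  | 1 => by simp [lucas, goldenRatio_add_goldenConj]
  | n + 2 => by
    rw [lucas, Nat.cast_add, lucas_eq_goldenRatio_pow_add_goldenConj_pow (n + 1),
      lucas_eq_goldenRatio_pow_add_goldenConj_pow n]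
    linear_combination (-φ ^ n) * goldenRatio_sq - ψ ^ n * goldenConj_sq

theorem goldenRatio_pow_irrational {n : ℕ} (hn : n ≠ 0) : Irrational (φ ^ n) := by
  obtain ⟨n, rfl⟩ := Nat.exists_eq_succ_of_ne_zero hn
  rw [← goldenRatio_mul_fib_succ_add_fib]
  exact (goldenRatio_irrational.mul_natCast (Nat.fib_pos.mpr n.succ_pos).ne').add_natCast _

theorem goldenRatio_zpow_irrational {e : ℤ} (he : e ≠ 0) : Irrational (φ ^ e) := by
  obtain ⟨n, rfl | rfl⟩ := Int.eq_nat_or_neg e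
  · rw [zpow_natCast]
    exact goldenRatio_pow_irrational (by omega)
  · rw [zpow_neg, zpow_natCast, irrational_inv_iff]
    exact goldenRatio_pow_irrational (by omega)

theorem eq_zero_of_natCast_pow_eq_mul_goldenRatio_zpow {a b p q : ℕ} {e : ℤ} (hb : b ≠ 0)
    (h : (a : ℝ) ^ p = (b : ℝ) ^ q * φ ^ e) : e = 0 := by
  by_contra he
  refine goldenRatio_zpow_irrational he ⟨(a : ℚ) ^ p / (b : ℚ) ^ q, ?_⟩
  push_cast
  rw [h]
  field_simp

theorem Nat.exists_eq_mul_of_mul_eq_mul {u v a b : ℕ} (hu : 0 < u) (huv : u.Coprime v)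
    (h : v * a = u * b) : ∃ w, a = u * w ∧ b = v * w := by
  obtain ⟨w, rfl⟩ : u ∣ a := huv.dvd_of_dvd_mul_left ⟨b, by linarith⟩
  refine ⟨w, rfl, Nat.eq_of_mul_eq_mul_left hu ?_⟩
  rw [← h]
  ring

theorem exists_common_base {a b k₁ k₂ n₁ n₂ : ℕ} (hk₁ : 0 < k₁) (hk : k₁ < k₂)
    (h : a ^ k₂ = b ^ k₁) (hn : k₂ * n₁ = k₁ * n₂) :
    ∃ g u v c w : ℕ, 0 < u ∧ u < v ∧ k₁ = g * u ∧ k₂ = g * v ∧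
      a = c ^ u ∧ b = c ^ v ∧ n₁ = u * w ∧ n₂ = v * w := by
  obtain ⟨c, ha, hb⟩ := Nat.exists_eq_pow_of_pow_eq_pow (Or.inl (by omega)) h
  set g := Nat.gcd k₂ k₁
  have hg : 0 < g := Nat.gcd_pos_of_pos_right _ hk₁
  have hk₁g : k₁ = g * (k₁ / g) := (Nat.mul_div_cancel' (Nat.gcd_dvd_right k₂ k₁)).symm
  have hk₂g : k₂ = g * (k₂ / g) := (Nat.mul_div_cancel' (Nat.gcd_dvd_left k₂ k₁)).symm
  have hu : 0 < k₁ / g := Nat.pos_of_ne_zero fun h0 => by rw [h0] at hk₁g; omega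
  have huv : k₁ / g < k₂ / g :=
    Nat.lt_of_mul_lt_mul_left (a := g) (by rw [← hk₁g, ← hk₂g]; exact hk)
  have hn' : k₂ / g * n₁ = k₁ / g * n₂ := by
    apply Nat.eq_of_mul_eq_mul_left hg
    rw [← mul_assoc, ← mul_assoc, ← hk₁g, ← hk₂g, hn]
  obtain ⟨w, hw₁, hw₂⟩ :=
    Nat.exists_eq_mul_of_mul_eq_mul hu (Nat.coprime_div_gcd_div_gcd hg).symm hn'
  exact ⟨g, k₁ / g, k₂ / g, c, w, hu, huv, hk₁g, hk₂g, ha, hb, hw₁, hw₂⟩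

theorem two_le_of_two_mul_lucas_eq_pow {m c u : ℕ} (h : 2 * lucas m = c ^ u) : 2 ≤ c := by
  by_contra! hc
  have := lucas_pos m
  have : c ^ u ≤ 1 := pow_le_one₀ (by omega) (by omega)
  omega

theorem le_three_of_two_mul_lucas_eq_pow {m c v : ℕ} (h : 2 * lucas m = c ^ v) : v ≤ 3 := by
  by_contra! hv
  obtain ⟨c, rfl⟩ : 2 ∣ c := Nat.prime_two.dvd_of_dvd_pow (n := v) ⟨lucas m, h.symm⟩
  have : 2 ^ 4 ∣ 2 * lucas m :=
    h ▸ (pow_dvd_pow 2 hv).trans (pow_dvd_pow_of_dvd (dvd_mul_right 2 c) v)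
  exact not_eight_dvd_lucas m (by omega)

section PowerSums

variable {R : Type*} [CommRing R] [IsDomain R] {A B C D : R}

theorem mul_eq_mul_of_add_eq_of_sq_add_sq_eq [CharZero R] (h₁ : A + B = C + D)
    (h₂ : A ^ 2 + B ^ 2 = C ^ 2 + D ^ 2) : A * B = C * D := by
  have : (2 : R) * (A * B - C * D) = 0 := by linear_combination (A + B + C + D) * h₁ - h₂
  simpa [sub_eq_zero] using this

theorem mul_eq_mul_of_add_eq_of_cube_add_cube_eq [CharZero R] (h₁ : A + B = C + D)
    (h₃ : A ^ 3 + B ^ 3 = C ^ 3 + D ^ 3) (h₀ : A + B ≠ 0) : A * B = C * D := by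
  have : (3 : R) * (A + B) * (A * B - C * D) = 0 := by
    linear_combination
      ((A + B) ^ 2 + (A + B) * (C + D) + (C + D) ^ 2 - 3 * (C * D)) * h₁ - h₃
  simpa [sub_eq_zero, h₀] using this

theorem mul_eq_mul_or_of_sq_add_sq_eq_of_cube_add_cube_eq (h₂ : A ^ 2 + B ^ 2 = C ^ 2 + D ^ 2)
    (h₃ : A ^ 3 + B ^ 3 = C ^ 3 + D ^ 3) :
    A * B = C * D ∨ 3 * (A * B + C * D) * (C + D) ^ 2 = 2 * (2 * (C * D) + A * B) ^ 2 := by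
  have key : (A + B) * ((C + D) ^ 2 - 2 * (C * D) - A * B) =
      (C + D) * ((C + D) ^ 2 - 3 * (C * D)) := by
    linear_combination h₃ - (A + B) * h₂
  have : (A * B - C * D) *
      (3 * (A * B + C * D) * (C + D) ^ 2 - 2 * (2 * (C * D) + A * B) ^ 2) = 0 := by
    linear_combination ((C + D) ^ 2 - 2 * (C * D) - A * B) ^ 2 * h₂ - ((A + B) *
      ((C + D) ^ 2 - 2 * (C * D) - A * B) + (C + D) * ((C + D) ^ 2 - 3 * (C * D))) * key
  simpa [sub_eq_zero] using this

end PowerSums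

theorem three_mul_mul_sq_ne_two_mul_sq {s t c l : ℤ} (hs : s ^ 2 = 1) (ht : t ^ 2 = 1)
    (hc : 2 ≤ c) :
    3 * (s + t * c ^ 2) * (c * l) ^ 2 ≠ 2 * (2 * (t * c ^ 2) + s) ^ 2 := by
  intro h
  -- modulo `c ^ 2` the identity reads `0 = 2 * s ^ 2 = 2`
  have hdvd : c ^ 2 ∣ 2 :=
    ⟨3 * (s + t * c ^ 2) * l ^ 2 - 8 * c ^ 2 - 8 * t * s, by
      linear_combination -h - 8 * c ^ 4 * ht - 2 * hs⟩
  nlinarith [Int.le_of_dvd two_pos hdvd]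

theorem pow_add_pow_ne_of_pow_add_pow_eq {A B C D : ℝ} {s t c l : ℤ} {u v : ℕ}
    (hs : s ^ 2 = 1) (ht : t ^ 2 = 1) (hc : 2 ≤ c) (hl : l ≠ 0)
    (hAB_mul : A * B = s) (hCD_mul : C * D = t * c ^ 2) (hCD_add : C + D = c * l)
    (hu : 0 < u) (huv : u < v) (hv : v ≤ 3) (h₁ : A ^ u + B ^ u = C ^ u + D ^ u) :
    A ^ v + B ^ v ≠ C ^ v + D ^ v := by
  intro h₂
  have hne : A * B ≠ C * D := by
    intro h
    have hst : s = t * c ^ 2 := by exact_mod_cast hAB_mul.symm.trans (h.trans hCD_mul)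
    have hc4 : (c ^ 2) ^ 2 = 1 := by rw [← hs, hst, mul_pow, ht, one_mul]
    have hc2 : 4 ≤ c ^ 2 := by nlinarith
    nlinarith
  obtain ⟨rfl, rfl⟩ | ⟨rfl, rfl⟩ | ⟨rfl, rfl⟩ :
      u = 1 ∧ v = 2 ∨ u = 1 ∧ v = 3 ∨ u = 2 ∧ v = 3 := by
    omega
  · simp only [pow_one] at h₁
    exact hne (mul_eq_mul_of_add_eq_of_sq_add_sq_eq h₁ h₂)
  · simp only [pow_one] at h₁
    refine hne (mul_eq_mul_of_add_eq_of_cube_add_cube_eq h₁ h₂ ?_)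
    rw [h₁, hCD_add]
    exact_mod_cast mul_ne_zero (by omega) hl
  · rcases mul_eq_mul_or_of_sq_add_sq_eq_of_cube_add_cube_eq h₁ h₂ with h | h
    · exact hne h
    · rw [hAB_mul, hCD_mul, hCD_add] at h
      exact three_mul_mul_sq_ne_two_mul_sq hs ht hc (by exact_mod_cast h)

theorem pow_add_pow_eq_of_eq_lucas_mul_lucas {δ η : ℝ} {g u c w m : ℕ}
    (hsol : (δ ^ (g * u) + η ^ (g * u)) / 2 = ((lucas (u * w) * lucas m : ℕ) : ℝ))
    (hm : 2 * lucas m = c ^ u) :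
    (δ ^ g) ^ u + (η ^ g) ^ u = (c * φ ^ w) ^ u + (c * ψ ^ w) ^ u := by
  have hm' : (2 : ℝ) * lucas m = (c : ℝ) ^ u := by exact_mod_cast hm
  push_cast at hsol
  calc (δ ^ g) ^ u + (η ^ g) ^ u = 2 * lucas m * lucas (u * w) := by
        rw [← pow_mul, ← pow_mul]
        linarith
    _ = (c * φ ^ w) ^ u + (c * ψ ^ w) ^ u := by
        rw [hm', lucas_eq_goldenRatio_pow_add_goldenConj_pow]
        ring

theorem stmt_13_general
    (d x1 y1 : ℕ) (ε : ℤ) (δ η : ℝ) (X : ℕ → ℝ)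
    (hε : (x1 : ℤ) ^ 2 - (d : ℤ) * (y1 : ℤ) ^ 2 = ε)
    (hεpm : ε = 1 ∨ ε = -1)
    (hδ : δ = (x1 : ℝ) + (y1 : ℝ) * Real.sqrt d)
    (hη : η = (x1 : ℝ) - (y1 : ℝ) * Real.sqrt d)
    (hX : ∀ k : ℕ, X k = (δ ^ k + η ^ k) / 2)
    (k1 n1 m1 k2 n2 m2 : ℕ)
    (hk1 : 1 ≤ k1) (hk12 : k1 < k2)
    (hsol1 : X k1 = ((lucas n1 * lucas m1 : ℕ) : ℝ))
    (hsol2 : X k2 = ((lucas n2 * lucas m2 : ℕ) : ℝ)) :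
    ((2 * lucas m1 : ℕ) : ℝ) ^ k2 ≠
      ((2 * lucas m2 : ℕ) : ℝ) ^ k1 * alpha ^ ((k2 : ℤ) * (n1 : ℤ) - (k1 : ℤ) * (n2 : ℤ)) := by
  intro h
  -- `alpha` unfolds to `φ`
  have he := eq_zero_of_natCast_pow_eq_mul_goldenRatio_zpow (by have := lucas_pos m2; omega) h
  rw [he, zpow_zero, mul_one] at h
  obtain ⟨g, u, v, c, w, hu, huv, rfl, rfl, hc₁, hc₂, rfl, rfl⟩ :=
    exists_common_base hk1 hk12 (by exact_mod_cast h) (by exact_mod_cast sub_eq_zero.mp he)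
  have hδη : δ * η = ε := by
    rw [hδ, hη, ← hε]
    push_cast
    linear_combination (-(y1 : ℝ) ^ 2) * Real.sq_sqrt (Nat.cast_nonneg (α := ℝ) d)
  rw [hX] at hsol1 hsol2
  refine pow_add_pow_ne_of_pow_add_pow_eq (s := ε ^ g) (t := (-1) ^ w) (c := c) (l := lucas w)
    ?_ ?_ (mod_cast two_le_of_two_mul_lucas_eq_pow hc₁) (mod_cast (lucas_pos w).ne') ?_ ?_ ?_ hu huv
    (le_three_of_two_mul_lucas_eq_pow hc₂) (pow_add_pow_eq_of_eq_lucas_mul_lucas hsol1 hc₁)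
    (pow_add_pow_eq_of_eq_lucas_mul_lucas hsol2 hc₂)
  · rcases hεpm with rfl | rfl <;> simp [← pow_mul, pow_mul']
  · simp [← pow_mul, pow_mul']
  · rw [← mul_pow, hδη, Int.cast_pow]
  · push_cast
    rw [mul_mul_mul_comm, ← mul_pow, goldenRatio_mul_goldenConj]
    ring
  · push_cast
    rw [lucas_eq_goldenRatio_pow_add_goldenConj_pow]
    ring

theorem stmt_13
    (d x1 y1 : ℕ) (ε : ℤ) (δ η : ℝ) (X : ℕ → ℝ)
    (hd : 2 ≤ d) (hdsf : Squarefree d)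
    (hx1 : 1 ≤ x1) (hy1 : 1 ≤ y1)
    (hε : (x1 : ℤ) ^ 2 - (d : ℤ) * (y1 : ℤ) ^ 2 = ε)
    (hεpm : ε = 1 ∨ ε = -1)
    (hmin : ∀ x y : ℕ, 1 ≤ x → 1 ≤ y →
      ((x : ℤ) ^ 2 - (d : ℤ) * (y : ℤ) ^ 2 = 1 ∨
        (x : ℤ) ^ 2 - (d : ℤ) * (y : ℤ) ^ 2 = -1) → x1 ≤ x)
    (hδ : δ = (x1 : ℝ) + (y1 : ℝ) * Real.sqrt d)
    (hη : η = (x1 : ℝ) - (y1 : ℝ) * Real.sqrt d)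
    (hX : ∀ k : ℕ, X k = (δ ^ k + η ^ k) / 2)
    (k1 n1 m1 k2 n2 m2 : ℕ)
    (hk1 : 1 ≤ k1) (hk2 : 1 ≤ k2) (hk12 : k1 < k2)
    (hnm1 : m1 ≤ n1) (hnm2 : m2 ≤ n2)
    (hsol1 : X k1 = ((lucas n1 * lucas m1 : ℕ) : ℝ))
    (hsol2 : X k2 = ((lucas n2 * lucas m2 : ℕ) : ℝ)) :
    ((2 * lucas m1 : ℕ) : ℝ) ^ k2 ≠
      ((2 * lucas m2 : ℕ) : ℝ) ^ k1 * alpha ^ ((k2 : ℤ) * (n1 : ℤ) - (k1 : ℤ) * (n2 : ℤ)) :=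
  stmt_13_general d x1 y1 ε δ η X hε hεpm hδ hη hX k1 n1 m1 k2 n2 m2 hk1 hk12 hsol1 hsol2
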